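/- arXiv:2002.01781 — 2 statements merged into one kernel-verified Lean document; each statement's English description precedes it below -/
import Mathlib

section
/- Let L > 0, C₁ > 0, C₂ > 0 be real numbers and q₁ < q₂ positive real numbers, and let h > 0. Set ħ₁ = (L/C₁)^{1/q₁}, ħ₂ = (L/C₂)^{1/q₂}, h* = (C₁/C₂)^{1/(q₂-q₁)}, and βᵢ = min(L, Cᵢ·h^{qᵢ}) for i = 1, 2. Let X₁ and X₂ be independent real random variables on a probability space (Ω, ℙ), with Xᵢ uniformly distributed on [0, βᵢ]. If h* ≤ min(ħ₁, ħ₂) and 0 < h ≤ h*, then ℙ{X₁ ≤ X₂} = (1/2)·(h/h*)^{q₂-q₁}. -/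
/-!
Under `h ≤ h* ≤ ħ₁` the caps are inactive: `β₁ = C₁ h^q₁ ≤ L`, and since
`β₂ / β₁ = C₂ h^q₂ / (C₁ h^q₁) = (h / h*)^(q₂ - q₁) ≤ 1` also `β₂ = C₂ h^q₂ ≤ β₁`.
For independent `X₁ ~ U[0, β₁]`, `X₂ ~ U[0, β₂]` with `β₂ ≤ β₁`, conditioning on `X₂ = y` gives
`ℙ{X₁ ≤ y} = y / β₁`, and averaging over `y ∈ [0, β₂]` gives `β₂ / (2 β₁)`.
-/

open MeasureTheory ProbabilityTheory Set

noncomputable def uniformIcc (b : ℝ) : Measure ℝ :=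
  volume.withDensity fun x => ENNReal.ofReal ((Icc (0 : ℝ) b).indicator (fun _ => 1 / b) x)

lemma uniformIcc_eq_smul_restrict (b : ℝ) :
    uniformIcc b = ENNReal.ofReal (1 / b) • volume.restrict (Icc 0 b) := by
  have hdens : (fun x => ENNReal.ofReal ((Icc (0 : ℝ) b).indicator (fun _ => 1 / b) x)) =
      (Icc 0 b).indicator fun _ => ENNReal.ofReal (1 / b) :=
    (indicator_comp_of_zero ENNReal.ofReal_zero).symm
  rw [uniformIcc, hdens, withDensity_indicator measurableSet_Icc, withDensity_const]

lemma uniformIcc_Iic {b y : ℝ} (hb : 0 < b) (hy : y ∈ Icc 0 b) :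
    uniformIcc b (Iic y) = ENNReal.ofReal (y / b) := by
  have hinter : Iic y ∩ Icc 0 b = Icc 0 y := by
    ext x
    simp only [mem_inter_iff, mem_Iic, mem_Icc]
    constructor
    · rintro ⟨hxy, h0x, -⟩
      exact ⟨h0x, hxy⟩
    · rintro ⟨h0x, hxy⟩
      exact ⟨hxy, h0x, hxy.trans hy.2⟩
  rw [uniformIcc_eq_smul_restrict, Measure.smul_apply, Measure.restrict_apply measurableSet_Iic,
    hinter, Real.volume_Icc, smul_eq_mul, ← ENNReal.ofReal_mul (by positivity)]
  congr 1
  ring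

lemma measure_le_eq_lintegral_map_Iic {Ω : Type*} [MeasurableSpace Ω] {P : Measure Ω}
    [IsFiniteMeasure P] {X Y : Ω → ℝ} (hX : Measurable X) (hY : Measurable Y)
    (hXY : IndepFun X Y P) :
    P {ω | X ω ≤ Y ω} = ∫⁻ y, P.map X (Iic y) ∂P.map Y := by
  have hle : MeasurableSet {p : ℝ × ℝ | p.1 ≤ p.2} := measurableSet_le measurable_fst measurable_snd
  calc P {ω | X ω ≤ Y ω} = P.map (fun ω => (X ω, Y ω)) {p | p.1 ≤ p.2} :=
        (Measure.map_apply (hX.prodMk hY) hle).symm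
    _ = ∫⁻ y, P.map X (Iic y) ∂P.map Y := by
        rw [hXY.map_prod_eq_prod_map_map hX.aemeasurable hY.aemeasurable,
          Measure.prod_apply_symm hle]
        rfl

lemma lintegral_Icc_ofReal_div {b : ℝ} (hb : 0 ≤ b) {c : ℝ} (hc : 0 ≤ c) :
    ∫⁻ y in Icc 0 b, ENNReal.ofReal (y / c) = ENNReal.ofReal (b ^ 2 / (2 * c)) := by
  have hcont : Continuous fun y : ℝ => y / c := continuous_id.div_const c
  rw [← ofReal_integral_eq_lintegral_ofReal (hcont.continuousOn.integrableOn_compact isCompact_Icc)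
    ?_, integral_Icc_eq_integral_Ioc, ← intervalIntegral.integral_of_le hb,
    intervalIntegral.integral_div, integral_id]
  · congr 1; ring
  · filter_upwards [ae_restrict_mem measurableSet_Icc] with y hy using div_nonneg hy.1 hc

lemma measure_le_of_map_eq_uniformIcc {Ω : Type*} [MeasurableSpace Ω] {P : Measure Ω}
    [IsFiniteMeasure P] {X Y : Ω → ℝ} {a b : ℝ} (hb : 0 < b) (hba : b ≤ a)
    (hX : Measurable X) (hY : Measurable Y) (hXY : IndepFun X Y P)
    (hXa : P.map X = uniformIcc a) (hYb : P.map Y = uniformIcc b) :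
    P {ω | X ω ≤ Y ω} = ENNReal.ofReal (b / (2 * a)) := by
  have ha : 0 < a := hb.trans_le hba
  calc P {ω | X ω ≤ Y ω}
      = ENNReal.ofReal (1 / b) * ∫⁻ y in Icc 0 b, uniformIcc a (Iic y) := by
        rw [measure_le_eq_lintegral_map_Iic hX hY hXY, hXa, hYb, uniformIcc_eq_smul_restrict b,
          lintegral_smul_measure, smul_eq_mul]
    _ = ENNReal.ofReal (1 / b) * ∫⁻ y in Icc 0 b, ENNReal.ofReal (y / a) := by
        congr 1
        refine setLIntegral_congr_fun measurableSet_Icc fun y hy => ?_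
        exact uniformIcc_Iic ha ⟨hy.1, hy.2.trans hba⟩
    _ = ENNReal.ofReal (b / (2 * a)) := by
        rw [lintegral_Icc_ofReal_div hb.le ha.le, ← ENNReal.ofReal_mul (by positivity)]
        congr 1
        field_simp

lemma mul_rpow_le_of_le_rpow_one_div {C L q h : ℝ} (hC : 0 < C) (hL : 0 ≤ L) (hq : 0 < q)
    (hh : 0 ≤ h) (hhL : h ≤ (L / C) ^ (1 / q)) : C * h ^ q ≤ L := by
  rw [one_div, Real.le_rpow_inv_iff_of_pos hh (div_nonneg hL hC.le) hq] at hhL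
  rwa [le_div_iff₀' hC] at hhL

lemma mul_rpow_div_mul_rpow {C₁ C₂ q₁ q₂ h : ℝ} (hC₁ : 0 < C₁) (hC₂ : 0 < C₂) (hq : q₁ < q₂)
    (hh : 0 < h) :
    C₂ * h ^ q₂ / (C₁ * h ^ q₁) = (h / (C₁ / C₂) ^ (1 / (q₂ - q₁))) ^ (q₂ - q₁) := by
  have hstar_pow : ((C₁ / C₂) ^ (1 / (q₂ - q₁))) ^ (q₂ - q₁) = C₁ / C₂ := by
    rw [← Real.rpow_mul (div_pos hC₁ hC₂).le, one_div_mul_cancel (sub_pos.mpr hq).ne',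
      Real.rpow_one]
  rw [Real.div_rpow hh.le (by positivity), hstar_pow, Real.rpow_sub hh]
  field_simp

theorem prob_dist_case2_small_general
    {Ω : Type*} [MeasurableSpace Ω] (P : Measure Ω) [IsProbabilityMeasure P]
    (L C₁ C₂ q₁ q₂ h : ℝ) (hL : 0 < L) (hC₁ : 0 < C₁) (hC₂ : 0 < C₂)
    (hq₁ : 0 < q₁) (hq : q₁ < q₂) (hh : 0 < h)
    (ℏ₁ ℏ₂ hstar β₁ β₂ : ℝ)
    (hℏ₁ : ℏ₁ = (L / C₁) ^ (1 / q₁))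
    (hstar_def : hstar = (C₁ / C₂) ^ (1 / (q₂ - q₁)))
    (hβ₁ : β₁ = min L (C₁ * h ^ q₁)) (hβ₂ : β₂ = min L (C₂ * h ^ q₂))
    (X₁ X₂ : Ω → ℝ) (hX₁ : Measurable X₁) (hX₂ : Measurable X₂)
    (hindep : IndepFun X₁ X₂ P)
    (hX₁unif : Measure.map X₁ P =
      volume.withDensity
        (fun x => ENNReal.ofReal ((Set.Icc (0:ℝ) β₁).indicator (fun _ => 1 / β₁) x)))
    (hX₂unif : Measure.map X₂ P =
      volume.withDensity
        (fun x => ENNReal.ofReal ((Set.Icc (0:ℝ) β₂).indicator (fun _ => 1 / β₂) x)))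
    (hcase : hstar ≤ min ℏ₁ ℏ₂) (hrange : h ≤ hstar) :
    P {ω | X₁ ω ≤ X₂ ω} = ENNReal.ofReal ((1/2) * (h / hstar) ^ (q₂ - q₁)) := by
  have hstar_pos : 0 < hstar := hstar_def ▸ Real.rpow_pos_of_pos (div_pos hC₁ hC₂) _
  have hratio : C₂ * h ^ q₂ / (C₁ * h ^ q₁) = (h / hstar) ^ (q₂ - q₁) :=
    hstar_def ▸ mul_rpow_div_mul_rpow hC₁ hC₂ hq hh
  have hratio_le : (h / hstar) ^ (q₂ - q₁) ≤ 1 :=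
    Real.rpow_le_one (div_nonneg hh.le hstar_pos.le) ((div_le_one hstar_pos).mpr hrange)
      (sub_pos.mpr hq).le
  have hle₁ : C₁ * h ^ q₁ ≤ L :=
    mul_rpow_le_of_le_rpow_one_div hC₁ hL.le hq₁ hh.le
      (hℏ₁ ▸ hrange.trans (hcase.trans (min_le_left _ _)))
  have hle₂₁ : C₂ * h ^ q₂ ≤ C₁ * h ^ q₁ :=
    (div_le_one (by positivity)).mp (hratio ▸ hratio_le)
  have hβ₁_eq : β₁ = C₁ * h ^ q₁ := hβ₁ ▸ min_eq_right hle₁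
  have hβ₂_eq : β₂ = C₂ * h ^ q₂ := hβ₂ ▸ min_eq_right (hle₂₁.trans hle₁)
  subst hβ₁_eq hβ₂_eq
  rw [measure_le_of_map_eq_uniformIcc (by positivity) hle₂₁ hX₁ hX₂ hindep hX₁unif hX₂unif,
    ← hratio]
  congr 1
  ring

/-- If h* ≤ min(ℏ₁,ℏ₂) and 0 < h ≤ h*, then P{X₁ ≤ X₂} = (1/2)·(h/h*)^(q₂-q₁). -/
theorem prob_dist_case2_small
    {Ω : Type*} [MeasurableSpace Ω] (P : Measure Ω) [IsProbabilityMeasure P]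
    (L C₁ C₂ q₁ q₂ h : ℝ) (hL : 0 < L) (hC₁ : 0 < C₁) (hC₂ : 0 < C₂)
    (hq₁ : 0 < q₁) (hq : q₁ < q₂) (hh : 0 < h)
    (ℏ₁ ℏ₂ hstar β₁ β₂ : ℝ)
    (hℏ₁ : ℏ₁ = (L / C₁) ^ (1 / q₁)) (hℏ₂ : ℏ₂ = (L / C₂) ^ (1 / q₂))
    (hstar_def : hstar = (C₁ / C₂) ^ (1 / (q₂ - q₁)))
    (hβ₁ : β₁ = min L (C₁ * h ^ q₁)) (hβ₂ : β₂ = min L (C₂ * h ^ q₂))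
    (X₁ X₂ : Ω → ℝ) (hX₁ : Measurable X₁) (hX₂ : Measurable X₂)
    (hindep : IndepFun X₁ X₂ P)
    (hX₁unif : Measure.map X₁ P =
      volume.withDensity
        (fun x => ENNReal.ofReal ((Set.Icc (0:ℝ) β₁).indicator (fun _ => 1 / β₁) x)))
    (hX₂unif : Measure.map X₂ P =
      volume.withDensity
        (fun x => ENNReal.ofReal ((Set.Icc (0:ℝ) β₂).indicator (fun _ => 1 / β₂) x)))
    (hcase : hstar ≤ min ℏ₁ ℏ₂) (hrange : h ≤ hstar) :
    P {ω | X₁ ω ≤ X₂ ω} = ENNReal.ofReal ((1/2) * (h / hstar) ^ (q₂ - q₁)) :=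
  prob_dist_case2_small_general P L C₁ C₂ q₁ q₂ h hL hC₁ hC₂ hq₁ hq hh ℏ₁ ℏ₂ hstar β₁ β₂ hℏ₁
    hstar_def hβ₁ hβ₂ X₁ X₂ hX₁ hX₂ hindep hX₁unif hX₂unif hcase hrange
end

section
/- Let L > 0, C₁ > 0, C₂ > 0 be real numbers and q₁ < q₂ positive real numbers, and let h > 0. Set ħ₁ = (L/C₁)^{1/q₁}, ħ₂ = (L/C₂)^{1/q₂}, h* = (C₁/C₂)^{1/(q₂-q₁)}, and βᵢ = min(L, Cᵢ·h^{qᵢ}) for i = 1, 2. Let X₁ and X₂ be independent real random variables on a probability space (Ω, ℙ), with Xᵢ uniformly distributed on [0, βᵢ]. If h* ≤ min(ħ₁, ħ₂) and ħ₂ ≤ h ≤ ħ₁, then ℙ{X₁ ≤ X₂} = 1 - (1/2)·(h/ħ₁)^{q₁}. -/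
/-! For ℏ₂ ≤ h ≤ ℏ₁ the minima resolve to β₁ = C₁ h^q₁ ≤ L = β₂. For independent uniforms on
nested intervals [0, β₁] ⊆ [0, β₂], conditioning on X₁ = x gives ℙ{X₂ ≥ x} = (β₂ - x)/β₂, and
averaging over x ∈ [0, β₁] yields 1 - β₁/(2β₂) = 1 - (1/2)(h/ℏ₁)^q₁. -/

open MeasureTheory ProbabilityTheory Set

lemma withDensity_ofReal_indicator_const {α : Type*} [MeasurableSpace α] (μ : Measure α)
    {s : Set α} (hs : MeasurableSet s) (c : ℝ) :
    μ.withDensity (fun x => ENNReal.ofReal (s.indicator (fun _ => c) x)) =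
      ENNReal.ofReal c • μ.restrict s := by
  have hdens : (fun x => ENNReal.ofReal (s.indicator (fun _ => c) x)) =
      s.indicator (fun _ => ENNReal.ofReal c) := by
    funext x
    by_cases hx : x ∈ s <;> simp [hx]
  rw [hdens, withDensity_indicator hs, withDensity_const]

lemma ProbabilityTheory.IndepFun.measure_le_eq_lintegral {Ω : Type*} [MeasurableSpace Ω] {P : Measure Ω}
    [IsFiniteMeasure P] {X Y : Ω → ℝ} (hX : Measurable X) (hY : Measurable Y)
    (hXY : IndepFun X Y P) :
    P {ω | X ω ≤ Y ω} = ∫⁻ x, P.map Y (Ici x) ∂(P.map X) := by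
  have hS : MeasurableSet {p : ℝ × ℝ | p.1 ≤ p.2} :=
    measurableSet_le measurable_fst measurable_snd
  change P ((fun ω => (X ω, Y ω)) ⁻¹' {p | p.1 ≤ p.2}) = _
  rw [← Measure.map_apply (hX.prodMk hY) hS,
    hXY.map_prod_eq_prod_map_map hX.aemeasurable hY.aemeasurable,
    Measure.prod_apply hS]
  rfl

lemma volume_Ici_inter_Icc_zero {x : ℝ} (hx : 0 ≤ x) (b : ℝ) :
    volume (Ici x ∩ Icc 0 b) = ENNReal.ofReal (b - x) := by
  have hset : Ici x ∩ Icc 0 b = Icc x b := by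
    ext y
    simp only [mem_inter_iff, mem_Ici, mem_Icc]
    exact ⟨fun h => ⟨h.1, h.2.2⟩, fun h => ⟨h.1, hx.trans h.1, h.2⟩⟩
  rw [hset, Real.volume_Icc]

lemma lintegral_Icc_zero_ofReal_sub {a b : ℝ} (ha : 0 ≤ a) (hab : a ≤ b) :
    ∫⁻ x in Icc 0 a, ENNReal.ofReal (b - x) = ENNReal.ofReal (a * b - a ^ 2 / 2) := by
  have hint : IntegrableOn (fun x : ℝ => b - x) (Icc 0 a) :=
    (continuous_const.sub continuous_id).integrableOn_Icc
  have hnonneg : 0 ≤ᵐ[volume.restrict (Icc 0 a)] fun x => b - x :=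
    (ae_restrict_mem measurableSet_Icc).mono fun x hx => sub_nonneg.2 (hx.2.trans hab)
  rw [← ofReal_integral_eq_lintegral_ofReal hint hnonneg, integral_Icc_eq_integral_Ioc,
    ← intervalIntegral.integral_of_le ha,
    intervalIntegral.integral_sub intervalIntegrable_const intervalIntegral.intervalIntegrable_id]
  simp only [intervalIntegral.integral_const, integral_id, smul_eq_mul]
  ring_nf

theorem measure_le_of_indepFun_uniform_Icc {Ω : Type*} [MeasurableSpace Ω] (P : Measure Ω)
    [IsProbabilityMeasure P] {β₁ β₂ : ℝ} (hβ₁ : 0 < β₁) (hβ : β₁ ≤ β₂)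
    {X₁ X₂ : Ω → ℝ} (hX₁ : Measurable X₁) (hX₂ : Measurable X₂) (hindep : IndepFun X₁ X₂ P)
    (hX₁unif : P.map X₁ =
      volume.withDensity (fun x => ENNReal.ofReal ((Icc 0 β₁).indicator (fun _ => 1 / β₁) x)))
    (hX₂unif : P.map X₂ =
      volume.withDensity (fun x => ENNReal.ofReal ((Icc 0 β₂).indicator (fun _ => 1 / β₂) x))) :
    P {ω | X₁ ω ≤ X₂ ω} = ENNReal.ofReal (1 - β₁ / (2 * β₂)) := by
  have hβ₂ : 0 < β₂ := hβ₁.trans_le hβ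
  have hinner : ∀ x ∈ Icc 0 β₁, (ENNReal.ofReal (1 / β₂) • volume.restrict (Icc 0 β₂)) (Ici x) =
      ENNReal.ofReal (1 / β₂) * ENNReal.ofReal (β₂ - x) := fun x hx => by
    rw [Measure.smul_apply, Measure.restrict_apply measurableSet_Ici,
      volume_Ici_inter_Icc_zero hx.1, smul_eq_mul]
  rw [hindep.measure_le_eq_lintegral hX₁ hX₂, hX₁unif, hX₂unif,
    withDensity_ofReal_indicator_const _ measurableSet_Icc,
    withDensity_ofReal_indicator_const _ measurableSet_Icc, lintegral_smul_measure,
    setLIntegral_congr_fun measurableSet_Icc hinner, lintegral_const_mul _ (by fun_prop),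
    lintegral_Icc_zero_ofReal_sub hβ₁.le hβ, smul_eq_mul, ← ENNReal.ofReal_mul (by positivity),
    ← ENNReal.ofReal_mul (by positivity)]
  congr 1
  field_simp

lemma mul_rpow_le_iff_le_rpow_one_div {C L q h : ℝ} (hC : 0 < C) (hL : 0 ≤ L) (hq : 0 < q)
    (hh : 0 ≤ h) : C * h ^ q ≤ L ↔ h ≤ (L / C) ^ (1 / q) := by
  rw [one_div, Real.le_rpow_inv_iff_of_pos hh (div_nonneg hL hC.le) hq, le_div_iff₀' hC]

lemma le_mul_rpow_iff_rpow_one_div_le {C L q h : ℝ} (hC : 0 < C) (hL : 0 ≤ L) (hq : 0 < q)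
    (hh : 0 ≤ h) : L ≤ C * h ^ q ↔ (L / C) ^ (1 / q) ≤ h := by
  rw [one_div, Real.rpow_inv_le_iff_of_pos (div_nonneg hL hC.le) hh hq, div_le_iff₀' hC]

theorem prob_dist_case2_mid2_general
    {Ω : Type*} [MeasurableSpace Ω] (P : Measure Ω) [IsProbabilityMeasure P]
    (L C₁ C₂ q₁ q₂ h : ℝ) (hL : 0 < L) (hC₁ : 0 < C₁) (hC₂ : 0 < C₂)
    (hq₁ : 0 < q₁) (hq : q₁ < q₂) (hh : 0 < h)
    (ℏ₁ ℏ₂ β₁ β₂ : ℝ)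
    (hℏ₁ : ℏ₁ = (L / C₁) ^ (1 / q₁)) (hℏ₂ : ℏ₂ = (L / C₂) ^ (1 / q₂))
    (hβ₁ : β₁ = min L (C₁ * h ^ q₁)) (hβ₂ : β₂ = min L (C₂ * h ^ q₂))
    (X₁ X₂ : Ω → ℝ) (hX₁ : Measurable X₁) (hX₂ : Measurable X₂)
    (hindep : IndepFun X₁ X₂ P)
    (hX₁unif : Measure.map X₁ P =
      volume.withDensity
        (fun x => ENNReal.ofReal ((Set.Icc (0:ℝ) β₁).indicator (fun _ => 1 / β₁) x)))
    (hX₂unif : Measure.map X₂ P =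
      volume.withDensity
        (fun x => ENNReal.ofReal ((Set.Icc (0:ℝ) β₂).indicator (fun _ => 1 / β₂) x)))
    (hrange₁ : ℏ₂ ≤ h) (hrange₂ : h ≤ ℏ₁) :
    P {ω | X₁ ω ≤ X₂ ω} = ENNReal.ofReal (1 - (1/2) * (h / ℏ₁) ^ q₁) := by
  have hβ₁_eq : β₁ = C₁ * h ^ q₁ := by
    rw [hβ₁, min_eq_right ((mul_rpow_le_iff_le_rpow_one_div hC₁ hL.le hq₁ hh.le).2
      (hℏ₁ ▸ hrange₂))]
  have hβ₂_eq : β₂ = L := by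
    rw [hβ₂, min_eq_left ((le_mul_rpow_iff_rpow_one_div_le hC₂ hL.le (hq₁.trans hq) hh.le).2
      (hℏ₂ ▸ hrange₁))]
  have hℏ₁_pow : ℏ₁ ^ q₁ = L / C₁ := by
    rw [hℏ₁, one_div, Real.rpow_inv_rpow (div_nonneg hL.le hC₁.le) hq₁.ne']
  have hβ_le : β₁ ≤ β₂ := by rw [hβ₁, hβ₂_eq]; exact min_le_left _ _
  rw [measure_le_of_indepFun_uniform_Icc P (hβ₁_eq ▸ by positivity) hβ_le hX₁ hX₂ hindep
    hX₁unif hX₂unif, Real.div_rpow hh.le (hh.trans_le hrange₂).le, hℏ₁_pow, hβ₁_eq, hβ₂_eq]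
  congr 1
  field_simp

/-- If h* ≤ min(ℏ₁,ℏ₂) and ℏ₂ ≤ h ≤ ℏ₁, then P{X₁ ≤ X₂} = 1 - (1/2)·(h/ℏ₁)^q₁. -/
theorem prob_dist_case2_mid2
    {Ω : Type*} [MeasurableSpace Ω] (P : Measure Ω) [IsProbabilityMeasure P]
    (L C₁ C₂ q₁ q₂ h : ℝ) (hL : 0 < L) (hC₁ : 0 < C₁) (hC₂ : 0 < C₂)
    (hq₁ : 0 < q₁) (hq : q₁ < q₂) (hh : 0 < h)
    (ℏ₁ ℏ₂ hstar β₁ β₂ : ℝ)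
    (hℏ₁ : ℏ₁ = (L / C₁) ^ (1 / q₁)) (hℏ₂ : ℏ₂ = (L / C₂) ^ (1 / q₂))
    (hstar_def : hstar = (C₁ / C₂) ^ (1 / (q₂ - q₁)))
    (hβ₁ : β₁ = min L (C₁ * h ^ q₁)) (hβ₂ : β₂ = min L (C₂ * h ^ q₂))
    (X₁ X₂ : Ω → ℝ) (hX₁ : Measurable X₁) (hX₂ : Measurable X₂)
    (hindep : IndepFun X₁ X₂ P)
    (hX₁unif : Measure.map X₁ P =
      volume.withDensity
        (fun x => ENNReal.ofReal ((Set.Icc (0:ℝ) β₁).indicator (fun _ => 1 / β₁) x)))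
    (hX₂unif : Measure.map X₂ P =
      volume.withDensity
        (fun x => ENNReal.ofReal ((Set.Icc (0:ℝ) β₂).indicator (fun _ => 1 / β₂) x)))
    (hcase : hstar ≤ min ℏ₁ ℏ₂) (hrange₁ : ℏ₂ ≤ h) (hrange₂ : h ≤ ℏ₁) :
    P {ω | X₁ ω ≤ X₂ ω} = ENNReal.ofReal (1 - (1/2) * (h / ℏ₁) ^ q₁) :=
  prob_dist_case2_mid2_general P L C₁ C₂ q₁ q₂ h hL hC₁ hC₂ hq₁ hq hh ℏ₁ ℏ₂ β₁ β₂ hℏ₁ hℏ₂ hβ₁ hβ₂ X₁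
    X₂ hX₁ hX₂ hindep hX₁unif hX₂unif hrange₁ hrange₂
end
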